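/- arXiv:2504.00302 — 5 statements merged into one kernel-verified Lean document; each statement's English description precedes it below -/
import Mathlib

section
/- Let x ∈ ℝ^m and V ∈ ℝ^{m×n} be entrywise nonnegative, and let s^{(t)} ∈ ℝ^n be entrywise strictly positive. Define s^{(t+1)}_j = s^{(t)}_j (Vᵀx)_j / (VᵀV s^{(t)})_j, assuming (VᵀV s^{(t)})_j > 0 for all j. Then ‖x − V s^{(t+1)}‖² ≤ ‖x − V s^{(t)}‖². -/
/-! Write `s' = s + s ⊙ w` with `w = g / d`, where `g = Vᵀ(x - Vs)` and `d = VᵀVs`. Expanding,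
`‖x - Vs'‖² = ‖x - Vs‖² - 2 g·(s ⊙ w) + (s ⊙ w)ᵀ VᵀV (s ⊙ w)`. Since `VᵀV` is symmetric with
nonnegative entries, AM-GM bounds the quadratic form by the diagonal majorant `∑ d_j s_j w_j²`
(Lee–Seung), and `d_j w_j = g_j` turns that majorant into `g·(s ⊙ w) = ∑ s_j g_j² / d_j ≥ 0`. -/

namespace Matrix

variable {ι κ R : Type*} [Fintype ι] [Fintype κ]

theorem sub_mulVec_dotProduct_self [CommRing R] (V : Matrix κ ι R) (r : κ → R) (u : ι → R) :
    (r - V *ᵥ u) ⬝ᵥ (r - V *ᵥ u) = r ⬝ᵥ r - 2 * (Vᵀ *ᵥ r) ⬝ᵥ u + u ⬝ᵥ (Vᵀ * V) *ᵥ u := by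
  have hcross : (V *ᵥ u) ⬝ᵥ r = (Vᵀ *ᵥ r) ⬝ᵥ u := by
    rw [dotProduct_comm, dotProduct_mulVec, ← mulVec_transpose]
  have hquad : (V *ᵥ u) ⬝ᵥ (V *ᵥ u) = u ⬝ᵥ (Vᵀ * V) *ᵥ u := by
    rw [dotProduct_mulVec, ← mulVec_transpose, ← mulVec_mulVec, dotProduct_comm]
  rw [sub_dotProduct, dotProduct_sub, dotProduct_sub, dotProduct_comm r (V *ᵥ u), hcross, hquad]
  ring

theorem IsSymm.dotProduct_mulVec_le_sum_mulVec_mul_sq [CommRing R] [LinearOrder R]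
    [IsStrictOrderedRing R] {A : Matrix ι ι R} (hA : A.IsSymm) (hA0 : ∀ j k, 0 ≤ A j k)
    {s : ι → R} (hs : ∀ j, 0 ≤ s j) (w : ι → R) :
    (s * w) ⬝ᵥ A *ᵥ (s * w) ≤ ∑ j, (A *ᵥ s) j * s j * w j ^ 2 := by
  set c : ι → ι → R := fun j k => A j k * s j * s k
  have hc0 : ∀ j k, 0 ≤ c j k := fun j k => mul_nonneg (mul_nonneg (hA0 j k) (hs j)) (hs k)
  have hlhs : (s * w) ⬝ᵥ A *ᵥ (s * w) = ∑ j, ∑ k, c j k * (w j * w k) := by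
    simp only [dotProduct, mulVec, Finset.mul_sum, Pi.mul_apply, c]
    refine Finset.sum_congr rfl fun j _ => Finset.sum_congr rfl fun k _ => by ring
  have hrhs : ∑ j, (A *ᵥ s) j * s j * w j ^ 2 = ∑ j, ∑ k, c j k * w j ^ 2 := by
    simp only [mulVec, dotProduct, Finset.sum_mul, c]
    refine Finset.sum_congr rfl fun j _ => Finset.sum_congr rfl fun k _ => by ring
  have hswap : ∑ j, ∑ k, c j k * w j ^ 2 = ∑ j, ∑ k, c j k * w k ^ 2 := by
    rw [Finset.sum_comm]
    refine Finset.sum_congr rfl fun j _ => Finset.sum_congr rfl fun k _ => ?_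
    simp only [c, hA.apply j k]
    ring
  -- AM-GM `2 w_j w_k ≤ w_j² + w_k²`, weighted by `A_jk s_j s_k` and averaged using symmetry
  have hamgm : 2 * ∑ j, ∑ k, c j k * (w j * w k) ≤
      ∑ j, ∑ k, c j k * w j ^ 2 + ∑ j, ∑ k, c j k * w k ^ 2 := by
    simp only [Finset.mul_sum, ← Finset.sum_add_distrib]
    refine Finset.sum_le_sum fun j _ => Finset.sum_le_sum fun k _ => ?_
    nlinarith [mul_nonneg (hc0 j k) (sq_nonneg (w j - w k))]
  rw [hlhs, hrhs]
  rw [← hswap] at hamgm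
  linarith

theorem IsSymm.dotProduct_mulVec_le_of_multiplicative_step [Field R] [LinearOrder R]
    [IsStrictOrderedRing R] {A : Matrix ι ι R} (hA : A.IsSymm) (hA0 : ∀ j k, 0 ≤ A j k)
    {s : ι → R} (hs : ∀ j, 0 ≤ s j) (hAs : ∀ j, (A *ᵥ s) j ≠ 0) (g : ι → R) :
    (s * (g / (A *ᵥ s))) ⬝ᵥ A *ᵥ (s * (g / (A *ᵥ s))) ≤ 2 * g ⬝ᵥ (s * (g / (A *ᵥ s))) := by
  set w := g / (A *ᵥ s)
  have hAs0 : ∀ j, 0 ≤ (A *ᵥ s) j := fun j =>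
    Finset.sum_nonneg fun k _ => mul_nonneg (hA0 j k) (hs k)
  have hdiag : ∑ j, (A *ᵥ s) j * s j * w j ^ 2 = g ⬝ᵥ (s * w) := by
    refine Finset.sum_congr rfl fun j _ => ?_
    simp only [w, Pi.mul_apply, Pi.div_apply]
    field_simp [hAs j]
  have hdiag0 : 0 ≤ ∑ j, (A *ᵥ s) j * s j * w j ^ 2 :=
    Finset.sum_nonneg fun j _ => mul_nonneg (mul_nonneg (hAs0 j) (hs j)) (sq_nonneg _)
  linarith [hA.dotProduct_mulVec_le_sum_mulVec_mul_sq hA0 hs w]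

end Matrix

open Matrix

theorem multiplicative_update_monotone_general (m n : ℕ)
    (x : Fin m → ℝ) (V : Matrix (Fin m) (Fin n) ℝ)
    (hV : ∀ i j, 0 ≤ V i j)
    (s : Fin n → ℝ) (hs : ∀ j, 0 < s j)
    (hden : ∀ j, 0 < Vᵀ.mulVec (V.mulVec s) j)
    (s' : Fin n → ℝ)
    (hs' : ∀ j, s' j = s j * (Vᵀ.mulVec x j) / (Vᵀ.mulVec (V.mulVec s) j)) :
    ∑ i, (x i - V.mulVec s' i) ^ 2 ≤ ∑ i, (x i - V.mulVec s i) ^ 2 := by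
  set g := Vᵀ *ᵥ (x - V *ᵥ s)
  have hden' : ∀ j, ((Vᵀ * V) *ᵥ s) j ≠ 0 := fun j => by
    rw [← mulVec_mulVec]; exact (hden j).ne'
  have hupdate : s' = s + s * (g / ((Vᵀ * V) *ᵥ s)) := funext fun j => by
    have := hden' j
    rw [← mulVec_mulVec] at this ⊢
    simp only [hs' j, g, mulVec_sub, Pi.add_apply, Pi.mul_apply, Pi.div_apply, Pi.sub_apply]
    field_simp
    ring
  have hsymm : (Vᵀ * V).IsSymm := by
    rw [IsSymm, transpose_mul, transpose_transpose]
  have hnonneg : ∀ j k, 0 ≤ (Vᵀ * V) j k := fun j k => by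
    rw [mul_apply]
    exact Finset.sum_nonneg fun i _ => mul_nonneg (hV i j) (hV i k)
  have hsq : ∀ y, ∑ i, (x i - (V *ᵥ y) i) ^ 2 = (x - V *ᵥ y) ⬝ᵥ (x - V *ᵥ y) := fun y => by
    simp only [dotProduct, sq, Pi.sub_apply]
  rw [hsq, hsq, hupdate, mulVec_add, ← sub_sub, sub_mulVec_dotProduct_self]
  linarith [hsymm.dotProduct_mulVec_le_of_multiplicative_step hnonneg (fun j => (hs j).le) hden' g]

theorem multiplicative_update_monotone (m n : ℕ)
    (x : Fin m → ℝ) (V : Matrix (Fin m) (Fin n) ℝ)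
    (hx : ∀ i, 0 ≤ x i) (hV : ∀ i j, 0 ≤ V i j)
    (s : Fin n → ℝ) (hs : ∀ j, 0 < s j)
    (hden : ∀ j, 0 < Vᵀ.mulVec (V.mulVec s) j)
    (s' : Fin n → ℝ)
    (hs' : ∀ j, s' j = s j * (Vᵀ.mulVec x j) / (Vᵀ.mulVec (V.mulVec s) j)) :
    ∑ i, (x i - V.mulVec s' i) ^ 2 ≤ ∑ i, (x i - V.mulVec s i) ^ 2 :=
  multiplicative_update_monotone_general m n x V hV s hs hden s' hs'
end

section
/- Let V ∈ ℝ^{m×n} be nonnegative, s, s⁰ ∈ ℝ^n with s nonnegative and s⁰ entrywise strictly positive. Then ‖V s‖² ≤ ∑_i (V (s²/s⁰))_i · (V s⁰)_i, where s²/s⁰ denotes the vector with entries s_j²/s⁰_j. -/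
/-! Row by row this is Cauchy–Schwarz with weights `Vᵢⱼ ≥ 0`, after splitting
`sⱼ² = (sⱼ² / s⁰ⱼ) · s⁰ⱼ`. -/

open Finset Matrix

theorem Finset.sq_sum_mul_le_sum_mul_sq_div_mul_sum_mul {ι R : Type*}
    [Field R] [LinearOrder R] [IsStrictOrderedRing R]
    (s : Finset ι) {w x y : ι → R} (hw : ∀ i ∈ s, 0 ≤ w i) (hy : ∀ i ∈ s, 0 < y i) :
    (∑ i ∈ s, w i * x i) ^ 2 ≤ (∑ i ∈ s, w i * (x i ^ 2 / y i)) * ∑ i ∈ s, w i * y i := by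
  refine sum_sq_le_sum_mul_sum_of_sq_le_mul s
    (fun i hi => mul_nonneg (hw i hi) (div_nonneg (sq_nonneg _) (hy i hi).le))
    (fun i hi => mul_nonneg (hw i hi) (hy i hi).le) fun i hi => le_of_eq ?_
  field_simp [(hy i hi).ne']

theorem Matrix.mulVec_sq_le_mulVec_sq_div_mul_mulVec {m n R : Type*} [Fintype n]
    [Field R] [LinearOrder R] [IsStrictOrderedRing R]
    {V : Matrix m n R} (hV : ∀ i j, 0 ≤ V i j) (s : n → R) {t : n → R} (ht : ∀ j, 0 < t j)
    (i : m) :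
    (V *ᵥ s) i ^ 2 ≤ (V *ᵥ fun j => s j ^ 2 / t j) i * (V *ᵥ t) i :=
  sq_sum_mul_le_sum_mul_sq_div_mul_sum_mul univ (fun j _ => hV i j) fun j _ => ht j

theorem quadratic_majorization_general (m n : ℕ)
    (V : Matrix (Fin m) (Fin n) ℝ) (hV : ∀ i j, 0 ≤ V i j)
    (s s0 : Fin n → ℝ) (hs0 : ∀ j, 0 < s0 j) :
    ∑ i, (V.mulVec s i) ^ 2 ≤
      ∑ i, (V.mulVec (fun j => s j ^ 2 / s0 j) i) * (V.mulVec s0 i) :=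
  sum_le_sum fun i _ => Matrix.mulVec_sq_le_mulVec_sq_div_mul_mulVec hV s hs0 i

theorem quadratic_majorization (m n : ℕ)
    (V : Matrix (Fin m) (Fin n) ℝ) (hV : ∀ i j, 0 ≤ V i j)
    (s s0 : Fin n → ℝ) (hs : ∀ j, 0 ≤ s j) (hs0 : ∀ j, 0 < s0 j) :
    ∑ i, (V.mulVec s i) ^ 2 ≤
      ∑ i, (V.mulVec (fun j => s j ^ 2 / s0 j) i) * (V.mulVec s0 i) :=
  quadratic_majorization_general m n V hV s s0 hs0
end

section
/- Let V ∈ ℝ^{m×n} be nonnegative and s⁰ ∈ ℝ^n entrywise strictly positive. Then the function s ↦ ⟨V(s²/s⁰), Vs⁰⟩ on ℝ^n is a convex quadratic form; in particular its Hessian is the diagonal matrix with entries 2(VᵀVs⁰)_j / s⁰_j, which is positive semidefinite. -/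
open Matrix

section

variable {𝕜 E β ι : Type*} [Semiring 𝕜] [PartialOrder 𝕜] [AddCommMonoid E] [SMul 𝕜 E]
  [AddCommMonoid β] [PartialOrder β] [IsOrderedAddMonoid β] [Module 𝕜 β]

theorem ConvexOn.fun_sum {s : Set E} (hs : Convex 𝕜 s) {t : Finset ι} {f : ι → E → β}
    (hf : ∀ i ∈ t, ConvexOn 𝕜 s (f i)) : ConvexOn 𝕜 s fun x => ∑ i ∈ t, f i x := by
  simpa only [← Finset.sum_fn] using
    t.sum_induction f (ConvexOn 𝕜 s) (fun _ _ => ConvexOn.add) (convexOn_const (0 : β) hs) hf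

end

theorem convexOn_weighted_sum_sq {ι : Type*} [Fintype ι] {c : ι → ℝ} (hc : 0 ≤ c) :
    ConvexOn ℝ Set.univ fun s : ι → ℝ => ∑ j, c j * s j ^ 2 :=
  ConvexOn.fun_sum convex_univ fun j _ => by
    simpa using ((Even.convexOn_pow even_two).comp_linearMap (LinearMap.proj j)).smul (hc j)

theorem Matrix.mulVec_nonneg {m n R : Type*} [Fintype n] [Semiring R] [PartialOrder R]
    [IsOrderedRing R] {A : Matrix m n R} (hA : ∀ i j, 0 ≤ A i j) {v : n → R} (hv : 0 ≤ v) :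
    0 ≤ A *ᵥ v :=
  fun i => Finset.sum_nonneg fun j _ => mul_nonneg (hA i j) (hv j)

theorem Matrix.mulVec_dotProduct_mulVec {m n R : Type*} [Fintype m] [Fintype n] [CommSemiring R]
    (A : Matrix m n R) (v w : n → R) : A *ᵥ v ⬝ᵥ A *ᵥ w = v ⬝ᵥ Aᵀ *ᵥ (A *ᵥ w) := by
  rw [dotProduct_comm, dotProduct_mulVec, ← mulVec_transpose, dotProduct_comm]

theorem quadratic_term_convex (m n : ℕ)
    (V : Matrix (Fin m) (Fin n) ℝ) (hV : ∀ i j, 0 ≤ V i j)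
    (s0 : Fin n → ℝ) (hs0 : ∀ j, 0 < s0 j) :
    ConvexOn ℝ Set.univ
      (fun s : Fin n → ℝ =>
        ∑ i, (V.mulVec (fun j => s j ^ 2 / s0 j) i) * (V.mulVec s0 i)) ∧
    (Matrix.diagonal (fun j => 2 * Vᵀ.mulVec (V.mulVec s0) j / s0 j)).PosSemidef := by
  set g := Vᵀ *ᵥ (V *ᵥ s0)
  have hg : 0 ≤ g := mulVec_nonneg (fun i j => hV j i) (mulVec_nonneg hV fun j => (hs0 j).le)
  have hsum_sq : (fun s : Fin n → ℝ => ∑ i, (V *ᵥ (fun j => s j ^ 2 / s0 j)) i * (V *ᵥ s0) i) =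
      fun s => ∑ j, g j / s0 j * s j ^ 2 := by
    funext s
    change V *ᵥ _ ⬝ᵥ V *ᵥ s0 = _
    rw [mulVec_dotProduct_mulVec, dotProduct]
    exact Finset.sum_congr rfl fun j _ => by ring
  refine ⟨hsum_sq ▸ convexOn_weighted_sum_sq fun j => ?_, posSemidef_diagonal_iff.mpr fun j => ?_⟩
  · exact div_nonneg (hg j) (hs0 j).le
  · exact div_nonneg (mul_nonneg zero_le_two (hg j)) (hs0 j).le
end

section
/- Let x ∈ ℝ^m, V ∈ ℝ^{m×n} nonnegative, and s⁰ ∈ ℝ^n entrywise strictly positive with (VᵀVs⁰)_j > 0 for all j. Then s* given by s*_j = s⁰_j (Vᵀx)_j/(VᵀVs⁰)_j is a global minimizer of Q(· | s⁰) = ‖x‖² − 2⟨x, V·⟩ + ⟨V(·²/s⁰), Vs⁰⟩ over all of ℝ^n, and s* is entrywise nonnegative whenever x is nonnegative. -/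
/-! The surrogate is separable: with `b = Vᵀx` and `d = VᵀVs⁰`,
`Q(s | s⁰) = ‖x‖² + ∑ⱼ (dⱼ / s⁰ⱼ · sⱼ² - 2 bⱼ sⱼ)`, a sum of one-variable convex quadratics.
The multiplicative update `s*ⱼ = s⁰ⱼ bⱼ / dⱼ` is the stationary point of each of them,
so it minimizes every summand and hence `Q`. -/

open Matrix

namespace Matrix

variable {R m n : Type*} [Fintype n]

theorem sum_mul_mulVec_eq_dotProduct [Fintype m] [CommSemiring R] (A : Matrix m n R) (u : m → R)
    (w : n → R) : ∑ i, u i * A.mulVec w i = Aᵀ.mulVec u ⬝ᵥ w := by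
  rw [mulVec_transpose, ← dotProduct_mulVec]
  rfl

theorem mulVec_nonneg_of_nonneg [CommSemiring R] [PartialOrder R] [IsOrderedRing R]
    {A : Matrix m n R} (hA : ∀ i j, 0 ≤ A i j) {v : n → R} (hv : ∀ j, 0 ≤ v j) (i : m) :
    0 ≤ A.mulVec v i :=
  dotProduct_nonneg_of_nonneg (hA i) hv

end Matrix

theorem mul_sq_sub_two_mul_mul_le_of_mul_eq {R : Type*} [CommRing R] [LinearOrder R]
    [IsStrictOrderedRing R] {a b t₀ : R} (ha : 0 ≤ a) (hb : a * t₀ = b) (t : R) :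
    a * t₀ ^ 2 - 2 * b * t₀ ≤ a * t ^ 2 - 2 * b * t := by
  subst hb
  -- the difference of the two sides is `a * (t - t₀) ^ 2`
  nlinarith [mul_nonneg ha (sq_nonneg (t - t₀))]

theorem surrogate_eq_separable {m n : Type*} [Fintype m] [Fintype n] (x : m → ℝ)
    (V : Matrix m n ℝ) (s0 s : n → ℝ) :
    (∑ i, x i ^ 2) - 2 * (∑ i, x i * V.mulVec s i) +
        ∑ i, (V.mulVec (fun j => s j ^ 2 / s0 j) i) * (V.mulVec s0 i) =
      (∑ i, x i ^ 2) + ∑ j, (Vᵀ.mulVec (V.mulVec s0) j / s0 j * s j ^ 2 -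
        2 * Vᵀ.mulVec x j * s j) := by
  simp_rw [mul_comm (V.mulVec _ _) (V.mulVec s0 _), sum_mul_mulVec_eq_dotProduct, dotProduct,
    Finset.sum_sub_distrib, Finset.mul_sum, div_mul_eq_mul_div, mul_div_assoc]
  simp only [mul_assoc]
  ring

theorem update_minimizes_surrogate (m n : ℕ)
    (x : Fin m → ℝ) (V : Matrix (Fin m) (Fin n) ℝ) (hV : ∀ i j, 0 ≤ V i j)
    (s0 : Fin n → ℝ) (hs0 : ∀ j, 0 < s0 j)
    (hden : ∀ j, 0 < Vᵀ.mulVec (V.mulVec s0) j)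
    (Q : (Fin n → ℝ) → ℝ)
    (hQ : ∀ s, Q s =
      (∑ i, x i ^ 2) - 2 * (∑ i, x i * V.mulVec s i) +
        ∑ i, (V.mulVec (fun j => s j ^ 2 / s0 j) i) * (V.mulVec s0 i))
    (sstar : Fin n → ℝ)
    (hsstar : ∀ j, sstar j = s0 j * (Vᵀ.mulVec x j) / (Vᵀ.mulVec (V.mulVec s0) j)) :
    (∀ s : Fin n → ℝ, Q sstar ≤ Q s) ∧
      ((∀ i, 0 ≤ x i) → ∀ j, 0 ≤ sstar j) := by
  simp_rw [hQ, surrogate_eq_separable]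
  refine ⟨fun s => ?_, fun hx j => ?_⟩
  · refine (add_le_add_iff_left _).2 (Finset.sum_le_sum fun j _ => ?_)
    refine mul_sq_sub_two_mul_mul_le_of_mul_eq (div_pos (hden j) (hs0 j)).le ?_ _
    have := (hs0 j).ne'
    have := (hden j).ne'
    rw [hsstar j]
    field_simp
  · rw [hsstar j]
    exact div_nonneg (mul_nonneg (hs0 j).le
      (mulVec_nonneg_of_nonneg (fun i j => hV j i) hx j)) (hden j).le
end

section
/- Let x ∈ ℝ^m be nonnegative and V ∈ ℝ^{m×n} nonnegative, and suppose s ∈ ℝ^n is entrywise strictly positive with (VᵀVs)_j > 0 for all j. If ‖x − V s'‖² = ‖x − V s‖², where s'_j = s_j (Vᵀx)_j/(VᵀVs)_j, and the surrogate Q(· | s) is strictly convex, then s' = s and Vᵀ(x − Vs) = 0. -/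
/-!
Cauchy–Schwarz on each row of `V` shows that the surrogate `Q(· | s)` majorizes the reconstruction
error and touches it at `s`. In terms of `t`, `Q(t | s)` is a separable quadratic with curvature
`(VᵀVs)_j / s_j > 0` whose minimizer is the multiplicative update `s'`, so
`Q(s | s) - Q(s' | s) = ∑ⱼ (VᵀVs)_j / s_j (s_j - s'_j)²`. Equal errors give
`Q(s | s) = ‖x - Vs‖² = ‖x - Vs'‖² ≤ Q(s' | s)`, so this weighted sum vanishes and `s' = s`;
a fixed point of the update has `(Vᵀx)_j = (VᵀVs)_j`, i.e. `Vᵀ(x - Vs) = 0`.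
-/

open Matrix

namespace MultiplicativeUpdate

theorem mulVec_sq_le_mulVec_sq_div_mul_mulVec {ι κ : Type*} [Fintype κ] {V : Matrix ι κ ℝ}
    (hV : ∀ i j, 0 ≤ V i j) {s : κ → ℝ} (hs : ∀ j, 0 < s j) (t : κ → ℝ) (i : ι) :
    (V *ᵥ t) i ^ 2 ≤ (V *ᵥ fun j => t j ^ 2 / s j) i * (V *ᵥ s) i := by
  refine Finset.sum_sq_le_sum_mul_sum_of_sq_le_mul _
    (fun j _ => mul_nonneg (hV i j) (div_nonneg (sq_nonneg _) (hs j).le))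
    (fun j _ => mul_nonneg (hV i j) (hs j).le) (fun j _ => le_of_eq ?_)
  field_simp [(hs j).ne']

variable {ι κ : Type*} [Fintype ι] [Fintype κ]

/-- The majorization-minimization surrogate `Q(t | s)` of `‖x - V t‖²`. -/
noncomputable def surrogate (x : ι → ℝ) (V : Matrix ι κ ℝ) (s t : κ → ℝ) : ℝ :=
  x ⬝ᵥ x - 2 * (x ⬝ᵥ V *ᵥ t) + (V *ᵥ fun j => t j ^ 2 / s j) ⬝ᵥ (V *ᵥ s)

theorem sum_sub_sq_eq (x w : ι → ℝ) :
    ∑ i, (x i - w i) ^ 2 = x ⬝ᵥ x - 2 * (x ⬝ᵥ w) + w ⬝ᵥ w := by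
  simp only [dotProduct, Finset.mul_sum, ← Finset.sum_sub_distrib, ← Finset.sum_add_distrib]
  exact Finset.sum_congr rfl fun i _ => by ring

theorem sum_sub_mulVec_sq_le_surrogate (x : ι → ℝ) {V : Matrix ι κ ℝ} (hV : ∀ i j, 0 ≤ V i j)
    {s : κ → ℝ} (hs : ∀ j, 0 < s j) (t : κ → ℝ) :
    ∑ i, (x i - (V *ᵥ t) i) ^ 2 ≤ surrogate x V s t := by
  rw [sum_sub_sq_eq, surrogate]
  have hrows : (V *ᵥ t) ⬝ᵥ (V *ᵥ t) ≤ (V *ᵥ fun j => t j ^ 2 / s j) ⬝ᵥ (V *ᵥ s) :=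
    Finset.sum_le_sum fun i _ => by
      simpa only [sq] using mulVec_sq_le_mulVec_sq_div_mul_mulVec hV hs t i
  linarith

theorem surrogate_self (x : ι → ℝ) (V : Matrix ι κ ℝ) {s : κ → ℝ} (hs : ∀ j, s j ≠ 0) :
    surrogate x V s s = ∑ i, (x i - (V *ᵥ s) i) ^ 2 := by
  have hsq : (fun j => s j ^ 2 / s j) = s := funext fun j => by field_simp [hs j]
  rw [surrogate, hsq, sum_sub_sq_eq]

theorem surrogate_eq (x : ι → ℝ) (V : Matrix ι κ ℝ) (s t : κ → ℝ) :
    surrogate x V s t =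
      x ⬝ᵥ x - 2 * (t ⬝ᵥ Vᵀ *ᵥ x) + (fun j => t j ^ 2 / s j) ⬝ᵥ (Vᵀ *ᵥ (V *ᵥ s)) := by
  rw [surrogate, dotProduct_transpose_mulVec, dotProduct_transpose_mulVec, dotProduct_comm (V *ᵥ s)]

theorem surrogate_sub_surrogate_update (x : ι → ℝ) (V : Matrix ι κ ℝ) {s s' : κ → ℝ}
    (hs : ∀ j, s j ≠ 0) (hden : ∀ j, (Vᵀ *ᵥ (V *ᵥ s)) j ≠ 0)
    (hs' : ∀ j, s' j = s j * (Vᵀ *ᵥ x) j / (Vᵀ *ᵥ (V *ᵥ s)) j) (t : κ → ℝ) :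
    surrogate x V s t - surrogate x V s s' =
      ∑ j, (Vᵀ *ᵥ (V *ᵥ s)) j / s j * (t j - s' j) ^ 2 := by
  set d := Vᵀ *ᵥ (V *ᵥ s)
  calc surrogate x V s t - surrogate x V s s'
      = ∑ j, ((t j ^ 2 / s j * d j - 2 * (t j * (Vᵀ *ᵥ x) j))
          - (s' j ^ 2 / s j * d j - 2 * (s' j * (Vᵀ *ᵥ x) j))) := by
        simp only [surrogate_eq, dotProduct, Finset.mul_sum, Finset.sum_sub_distrib]
        ring
    _ = ∑ j, d j / s j * (t j - s' j) ^ 2 := Finset.sum_congr rfl fun j _ => by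
        rw [hs' j]
        field_simp [hs j, hden j]
        ring

theorem eq_of_sum_mul_sq_sub_nonpos {w a b : κ → ℝ} (hw : ∀ j, 0 < w j)
    (h : ∑ j, w j * (a j - b j) ^ 2 ≤ 0) : a = b := by
  have hnonneg : ∀ j ∈ Finset.univ, 0 ≤ w j * (a j - b j) ^ 2 :=
    fun j _ => mul_nonneg (hw j).le (sq_nonneg _)
  have hzero :=
    (Finset.sum_eq_zero_iff_of_nonneg hnonneg).1 (h.antisymm (Finset.sum_nonneg hnonneg))
  funext j
  have := hzero j (Finset.mem_univ j)
  rw [mul_eq_zero, sq_eq_zero_iff, sub_eq_zero] at this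
  exact this.resolve_left (hw j).ne'

theorem transpose_mulVec_sub_eq_zero_of_update_eq_self (x : ι → ℝ) (V : Matrix ι κ ℝ)
    {s : κ → ℝ} (hs : ∀ j, s j ≠ 0) (hden : ∀ j, (Vᵀ *ᵥ (V *ᵥ s)) j ≠ 0)
    (hfix : ∀ j, s j = s j * (Vᵀ *ᵥ x) j / (Vᵀ *ᵥ (V *ᵥ s)) j) :
    Vᵀ *ᵥ (x - V *ᵥ s) = 0 := by
  funext j
  have := hfix j
  rw [eq_div_iff (hden j), mul_right_inj' (hs j)] at this
  rw [mulVec_sub, Pi.sub_apply, this, sub_self, Pi.zero_apply]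

end MultiplicativeUpdate

open MultiplicativeUpdate in
theorem equality_case_fixed_point_general (m n : ℕ)
    (x : Fin m → ℝ)
    (V : Matrix (Fin m) (Fin n) ℝ) (hV : ∀ i j, 0 ≤ V i j)
    (s : Fin n → ℝ) (hs : ∀ j, 0 < s j)
    (hden : ∀ j, 0 < Vᵀ.mulVec (V.mulVec s) j)
    (s' : Fin n → ℝ)
    (hs' : ∀ j, s' j = s j * (Vᵀ.mulVec x j) / (Vᵀ.mulVec (V.mulVec s) j))
    (heq : ∑ i, (x i - V.mulVec s' i) ^ 2 = ∑ i, (x i - V.mulVec s i) ^ 2) :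
    s' = s ∧ Vᵀ.mulVec (fun i => x i - V.mulVec s i) = 0 := by
  have hsne : ∀ j, s j ≠ 0 := fun j => (hs j).ne'
  have hdne : ∀ j, (Vᵀ *ᵥ (V *ᵥ s)) j ≠ 0 := fun j => (hden j).ne'
  have hQ : surrogate x V s s ≤ surrogate x V s s' := calc
    surrogate x V s s = ∑ i, (x i - (V *ᵥ s) i) ^ 2 := surrogate_self x V hsne
    _ = ∑ i, (x i - (V *ᵥ s') i) ^ 2 := heq.symm
    _ ≤ surrogate x V s s' := sum_sub_mulVec_sq_le_surrogate x hV hs s'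
  have hgap := surrogate_sub_surrogate_update x V hsne hdne hs' s
  have hfix : s = s' :=
    eq_of_sum_mul_sq_sub_nonpos (fun j => div_pos (hden j) (hs j)) (by linarith)
  refine ⟨hfix.symm, transpose_mulVec_sub_eq_zero_of_update_eq_self x V hsne hdne ?_⟩
  simpa only [← hfix] using hs'

theorem equality_case_fixed_point (m n : ℕ)
    (x : Fin m → ℝ) (hx : ∀ i, 0 ≤ x i)
    (V : Matrix (Fin m) (Fin n) ℝ) (hV : ∀ i j, 0 ≤ V i j)
    (s : Fin n → ℝ) (hs : ∀ j, 0 < s j)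
    (hden : ∀ j, 0 < Vᵀ.mulVec (V.mulVec s) j)
    (s' : Fin n → ℝ)
    (hs' : ∀ j, s' j = s j * (Vᵀ.mulVec x j) / (Vᵀ.mulVec (V.mulVec s) j))
    (hstrict : StrictConvexOn ℝ Set.univ
      (fun s' : Fin n → ℝ =>
        (∑ i, x i ^ 2) - 2 * (∑ i, x i * V.mulVec s' i) +
          ∑ i, (V.mulVec (fun j => s' j ^ 2 / s j) i) * (V.mulVec s i)))
    (heq : ∑ i, (x i - V.mulVec s' i) ^ 2 = ∑ i, (x i - V.mulVec s i) ^ 2) :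
    s' = s ∧ Vᵀ.mulVec (fun i => x i - V.mulVec s i) = 0 :=
  equality_case_fixed_point_general m n x V hV s hs hden s' hs' heq
end
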